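/- Let Γ be the complete bridge graph B_{m,n} with m ≥ n ≥ 2. Then there exists a minimal prime graph Γ* on one more vertex than Γ, and a vertex α of Γ*, such that the induced subgraph of Γ* on all vertices other than α is isomorphic to Γ. -/

import Mathlib

/-!
Add to `B_{m,n}` a vertex `α` joined to every vertex except the two ends of the bridge. The
complement of the result is `K_{m,n}` minus the bridge, together with `α` joined to the two bridge
ends. These ends are not adjacent there, so the complement is triangle-free, and it is 3-colourable
(the two sides of `K_{m,n}`, and one more colour for `α`). For minimality, every edge `ab` has a
common non-neighbour `c`, so deleting `ab` creates the triangle `abc` in the complement: `c` is a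
non-end vertex of the other clique for an edge inside a clique, `α` for the bridge, and the end of
the other clique for an edge at `α`.
-/

open SimpleGraph

def bridgeAdj (m n : ℕ) : (Fin m ⊕ Fin n) → (Fin m ⊕ Fin n) → Prop
  | Sum.inl i, Sum.inl j => i ≠ j
  | Sum.inr i, Sum.inr j => i ≠ j
  | Sum.inl i, Sum.inr j => i.val = 0 ∧ j.val = 0
  | Sum.inr i, Sum.inl j => i.val = 0 ∧ j.val = 0

/-- The complete bridge graph `B_{m,n}`: two disjoint complete graphs on `m` and `n`
vertices respectively, joined by exactly one edge (the bridge). -/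
def completeBridgeGraph (m n : ℕ) : SimpleGraph (Fin m ⊕ Fin n) where
  Adj := bridgeAdj m n
  symm := by
    constructor
    rintro (a | a) (b | b) h <;> simp_all [bridgeAdj] <;> tauto
  loopless := by
    constructor
    rintro (a | a) h <;> simp_all [bridgeAdj]

/-- A minimally connected prime graph (MCPG). -/
def IsMCPG {V : Type} [Fintype V] (Γ : SimpleGraph V) : Prop :=
  2 ≤ Fintype.card V ∧ Γ.Connected ∧ Γᶜ.CliqueFree 3 ∧ Γᶜ.Colorable 3 ∧
    ∀ e ∈ Γ.edgeSet,
      ¬((Γ.deleteEdges {e}).Connected ∧ (Γ.deleteEdges {e})ᶜ.CliqueFree 3 ∧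
        (Γ.deleteEdges {e})ᶜ.Colorable 3)

/-- A minimal prime graph (MPG). -/
def IsMPG {V : Type} [Fintype V] (Γ : SimpleGraph V) : Prop :=
  2 ≤ Fintype.card V ∧ Γ.Connected ∧ Γᶜ.CliqueFree 3 ∧ Γᶜ.Colorable 3 ∧
    ∀ e ∈ Γ.edgeSet,
      ¬((Γ.deleteEdges {e})ᶜ.CliqueFree 3 ∧ (Γ.deleteEdges {e})ᶜ.Colorable 3)

/-- A possibly disconnected minimal prime graph (PDMPG). -/
def IsPDMPG {V : Type} [Fintype V] (Γ : SimpleGraph V) : Prop :=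
  Γᶜ.CliqueFree 3 ∧ Γᶜ.Colorable 3 ∧
    ∀ e ∈ Γ.edgeSet,
      ¬((Γ.deleteEdges {e})ᶜ.CliqueFree 3 ∧ (Γ.deleteEdges {e})ᶜ.Colorable 3)


namespace SimpleGraph

variable {V W : Type*} {G : SimpleGraph V} {H : SimpleGraph W}

namespace Iso

def compl (f : G ≃g H) : Gᶜ ≃g Hᶜ :=
  ⟨f.toEquiv, by simp [compl_adj, f.map_adj_iff]⟩

theorem cliqueFree_iff (f : G ≃g H) {n : ℕ} : G.CliqueFree n ↔ H.CliqueFree n :=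
  ⟨fun h => h.comap f.isContained', fun h => h.comap f.isContained⟩

theorem colorable_iff (f : G ≃g H) {n : ℕ} : G.Colorable n ↔ H.Colorable n :=
  ⟨.of_hom f.symm.toHom, .of_hom f.toHom⟩

def deleteEdges (f : G ≃g H) (s : Set (Sym2 V)) :
    G.deleteEdges s ≃g H.deleteEdges (Sym2.map f '' s) :=
  ⟨f.toEquiv, fun {a b} => by
    rw [deleteEdges_adj, deleteEdges_adj]
    change H.Adj (f a) (f b) ∧ Sym2.map f s(a, b) ∉ Sym2.map f '' s ↔ G.Adj a b ∧ s(a, b) ∉ s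
    rw [f.map_adj_iff, (Sym2.map.injective f.injective).mem_set_image]⟩

end Iso

theorem not_cliqueFree_three_compl_deleteEdges {a b c : V} (hab : G.Adj a b)
    (hac : Gᶜ.Adj a c) (hbc : Gᶜ.Adj b c) : ¬(G.deleteEdges {s(a, b)})ᶜ.CliqueFree 3 := by
  classical
  have hle : Gᶜ ≤ (G.deleteEdges {s(a, b)})ᶜ := compl_le_compl (G.deleteEdges_le _)
  exact fun h => h {a, b, c} (is3Clique_triple_iff.2 ⟨by simp [hab.ne], hle hac, hle hbc⟩)

section AddVertex

variable (G) (s : Set V)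

def addVertex : SimpleGraph (Option V) where
  Adj
    | some u, some v => G.Adj u v
    | some u, none | none, some u => u ∈ s
    | none, none => False
  symm := ⟨by
    rintro (_ | u) (_ | v) h
    exacts [h, h, h, h.symm]⟩
  loopless := ⟨by
    rintro (_ | u) h
    exacts [h, G.loopless.irrefl u h]⟩

variable {G s}

@[simp] theorem addVertex_adj_some_some {u v : V} :
    (G.addVertex s).Adj (some u) (some v) ↔ G.Adj u v := .rfl

@[simp] theorem addVertex_adj_some_none {u : V} : (G.addVertex s).Adj (some u) none ↔ u ∈ s :=
  .rfl

@[simp] theorem addVertex_adj_none_some {u : V} : (G.addVertex s).Adj none (some u) ↔ u ∈ s :=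
  .rfl

@[simp] theorem not_addVertex_adj_none_none : ¬(G.addVertex s).Adj none none := id

theorem compl_addVertex : (G.addVertex s)ᶜ = Gᶜ.addVertex sᶜ := by
  ext (_ | u) (_ | v) <;> simp [compl_adj]

variable (G s) in
def addVertexEmbedding : G ↪g G.addVertex s :=
  ⟨⟨some, Option.some_injective V⟩, .rfl⟩

theorem Connected.addVertex (hG : G.Connected) (hs : s.Nonempty) :
    (G.addVertex s).Connected := by
  obtain ⟨u, hu⟩ := hs
  have hsome : ∀ v, (G.addVertex s).Reachable (some u) (some v) := fun v =>
    (hG u v).map (addVertexEmbedding G s).toHom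
  have hnone : (G.addVertex s).Reachable (some u) none := (addVertex_adj_some_none.2 hu).reachable
  refine (connected_iff_exists_forall_reachable _).2 ⟨some u, ?_⟩
  rintro (_ | v)
  exacts [hnone, hsome v]

theorem Colorable.addVertex {n : ℕ} (hG : G.Colorable n) : (G.addVertex s).Colorable (n + 1) := by
  obtain ⟨c⟩ := hG
  refine ⟨Coloring.mk (Option.elim · (Fin.last n) (Fin.castSucc ∘ c)) ?_⟩
  rintro (_ | u) (_ | v) h
  · exact absurd h not_addVertex_adj_none_none
  · exact (Fin.castSucc_lt_last _).ne'
  · exact (Fin.castSucc_lt_last _).ne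
  · exact Fin.castSucc_injective _ |>.ne (c.valid h)

theorem CliqueFree.addVertex (hG : G.CliqueFree 3) (hs : G.IsIndepSet s) :
    (G.addVertex s).CliqueFree 3 := by
  classical
  rintro t ht
  obtain ⟨a, b, c, hab, hac, hbc, rfl⟩ := is3Clique_iff.1 ht
  rcases a with _ | a <;> rcases b with _ | b <;> rcases c with _ | c <;> simp at hab hac hbc
  · exact hs hab hac hbc.ne hbc
  · exact hs hab hbc hac.ne hac
  · exact hs hac hbc hab.ne hab
  · exact hG {a, b, c} (is3Clique_triple_iff.2 ⟨hab, hac, hbc⟩)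

variable (G s) in
noncomputable def addVertexInduceIso : (G.addVertex s).induce {v | v ≠ none} ≃g G :=
  (Iso.refl.induce (Equiv.refl _ |>.bijOn fun
    | none => iff_of_false (fun ⟨_, h⟩ => Option.some_ne_none _ h) (· rfl)
    | some v => iff_of_true ⟨v, rfl⟩ (Option.some_ne_none v))).trans
    (addVertexEmbedding G s).isoInduceRange.symm

end AddVertex

end SimpleGraph

theorem isMPG_of_forall_adj_exists_compl_adj {V : Type} [Fintype V] {Γ : SimpleGraph V}
    (hcard : 2 ≤ Fintype.card V) (hconn : Γ.Connected) (hcf : Γᶜ.CliqueFree 3)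
    (hcol : Γᶜ.Colorable 3) (hmin : ∀ a b, Γ.Adj a b → ∃ c, Γᶜ.Adj a c ∧ Γᶜ.Adj b c) :
    IsMPG Γ := by
  refine ⟨hcard, hconn, hcf, hcol, fun e he => ?_⟩
  induction e using Sym2.ind with
  | _ a b =>
    obtain ⟨c, hac, hbc⟩ := hmin a b he
    exact fun h => not_cliqueFree_three_compl_deleteEdges he hac hbc h.1

theorem IsMPG.of_iso {V W : Type} [Fintype V] [Fintype W] {G : SimpleGraph V}
    {H : SimpleGraph W} (hG : IsMPG G) (f : G ≃g H) : IsMPG H := by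
  obtain ⟨hcard, hconn, hcf, hcol, hmin⟩ := hG
  refine ⟨Fintype.card_congr f.toEquiv ▸ hcard, f.connected_iff.1 hconn,
    f.compl.cliqueFree_iff.1 hcf, f.compl.colorable_iff.1 hcol, fun e he ⟨hcf', hcol'⟩ => ?_⟩
  have g : H.deleteEdges {e} ≃g G.deleteEdges {e.map f.symm} :=
    Set.image_singleton ▸ f.symm.deleteEdges {e}
  exact hmin _ (f.symm.map_mem_edgeSet_iff.2 he)
    ⟨g.compl.cliqueFree_iff.1 hcf', g.compl.colorable_iff.1 hcol'⟩

section CompleteBridgeGraph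

variable {m n : ℕ}

@[simp] theorem completeBridgeGraph_adj_inl_inl {i j : Fin m} :
    (completeBridgeGraph m n).Adj (.inl i) (.inl j) ↔ i ≠ j := .rfl

@[simp] theorem completeBridgeGraph_adj_inr_inr {i j : Fin n} :
    (completeBridgeGraph m n).Adj (.inr i) (.inr j) ↔ i ≠ j := .rfl

@[simp] theorem completeBridgeGraph_adj_inl_inr {i : Fin m} {j : Fin n} :
    (completeBridgeGraph m n).Adj (.inl i) (.inr j) ↔ i.val = 0 ∧ j.val = 0 := .rfl

@[simp] theorem completeBridgeGraph_adj_inr_inl {i : Fin n} {j : Fin m} :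
    (completeBridgeGraph m n).Adj (.inr i) (.inl j) ↔ i.val = 0 ∧ j.val = 0 := .rfl

variable (m n) in
def bridgeEnds : Set (Fin m ⊕ Fin n) := {v | Sum.elim (·.val = 0) (·.val = 0) v}

@[simp] theorem inl_mem_bridgeEnds {i : Fin m} : .inl i ∈ bridgeEnds m n ↔ i.val = 0 := .rfl

@[simp] theorem inr_mem_bridgeEnds {j : Fin n} : .inr j ∈ bridgeEnds m n ↔ j.val = 0 := .rfl

theorem completeBridgeGraph_connected (hm : 0 < m) (hn : 0 < n) :
    (completeBridgeGraph m n).Connected := by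
  have hbridge : (completeBridgeGraph m n).Adj (.inl ⟨0, hm⟩) (.inr ⟨0, hn⟩) := by simp
  refine (connected_iff_exists_forall_reachable _).2 ⟨.inl ⟨0, hm⟩, ?_⟩
  rintro (i | j)
  · by_cases hi : i = ⟨0, hm⟩
    · exact hi ▸ .rfl
    · exact (completeBridgeGraph_adj_inl_inl.2 (Ne.symm hi)).reachable
  · by_cases hj : j = ⟨0, hn⟩
    · exact hj ▸ hbridge.reachable
    · exact hbridge.reachable.trans (completeBridgeGraph_adj_inr_inr.2 (Ne.symm hj)).reachable

theorem colorable_two_compl_completeBridgeGraph : (completeBridgeGraph m n)ᶜ.Colorable 2 :=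
  ⟨Coloring.mk (Sum.elim (fun _ => 0) (fun _ => 1)) (by
    rintro (i | i) (j | j) h <;> simp_all [compl_adj])⟩

theorem isIndepSet_compl_bridgeEnds : (completeBridgeGraph m n)ᶜ.IsIndepSet (bridgeEnds m n) := by
  rintro (i | i) hi (j | j) hj hij <;> simp_all [compl_adj, Fin.ext_iff]

variable (m n) in
abbrev extendedBridgeGraph : SimpleGraph (Option (Fin m ⊕ Fin n)) :=
  (completeBridgeGraph m n).addVertex (bridgeEnds m n)ᶜ

theorem compl_extendedBridgeGraph :
    (extendedBridgeGraph m n)ᶜ = (completeBridgeGraph m n)ᶜ.addVertex (bridgeEnds m n) := by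
  rw [compl_addVertex, compl_compl]

theorem extendedBridgeGraph_exists_compl_adj (hm : 2 ≤ m) (hn : 2 ≤ n)
    {a b : Option (Fin m ⊕ Fin n)} (hab : (extendedBridgeGraph m n).Adj a b) :
    ∃ c, (extendedBridgeGraph m n)ᶜ.Adj a c ∧ (extendedBridgeGraph m n)ᶜ.Adj b c := by
  rw [compl_extendedBridgeGraph]
  rcases a with _ | i | i <;> rcases b with _ | j | j
  · simp at hab
  · use some (.inr ⟨0, by omega⟩); simp_all
  · use some (.inl ⟨0, by omega⟩); simp_all
  · use some (.inr ⟨0, by omega⟩); simp_all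
  · use some (.inr ⟨1, hn⟩); simp_all
  · use none; simp_all
  · use some (.inl ⟨0, by omega⟩); simp_all
  · use none; simp_all
  · use some (.inl ⟨1, hm⟩); simp_all

theorem isMPG_extendedBridgeGraph (hm : 2 ≤ m) (hn : 2 ≤ n) : IsMPG (extendedBridgeGraph m n) := by
  refine isMPG_of_forall_adj_exists_compl_adj (by simp; omega)
    ((completeBridgeGraph_connected (by omega) (by omega)).addVertex ⟨.inl ⟨1, hm⟩, by simp⟩)
    ?_ ?_ fun _ _ => extendedBridgeGraph_exists_compl_adj hm hn
  · rw [compl_extendedBridgeGraph]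
    exact (colorable_two_compl_completeBridgeGraph.cliqueFree (by norm_num)).addVertex
      isIndepSet_compl_bridgeEnds
  · rw [compl_extendedBridgeGraph]
    exact colorable_two_compl_completeBridgeGraph.addVertex

end CompleteBridgeGraph

/-- For `m ≥ n ≥ 2` there is a minimal prime graph `Γ*` on one more vertex than
`B_{m,n}` and a vertex `α` of `Γ*` such that the induced subgraph of `Γ*` on the
remaining vertices is isomorphic to `B_{m,n}`. -/
theorem stmt3 (m n : ℕ) (h1 : 2 ≤ n) (h2 : n ≤ m) :
    ∃ Γstar : SimpleGraph (Fin (m + n + 1)), IsMPG Γstar ∧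
      ∃ α : Fin (m + n + 1),
        Nonempty ((Γstar.induce {v | v ≠ α}) ≃g completeBridgeGraph m n) := by
  let e : Option (Fin m ⊕ Fin n) ≃ Fin (m + n + 1) := Fintype.equivFinOfCardEq (by simp)
  let f := Iso.map e (extendedBridgeGraph m n)
  refine ⟨_, (isMPG_extendedBridgeGraph (h1.trans h2) h1).of_iso f, e none, ⟨?_⟩⟩
  exact (f.induce (e.bijOn fun v => e.injective.ne_iff)).symm.trans (addVertexInduceIso _ _)
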